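/- (Talagrand's lower ℓ_∞ extraction, statement) Let z'_1, …, z'_l be vectors in a normed space with ‖z'_i‖ ≥ 1 for all i. Set w' = max over all sign choices of ‖∑_{i=1}^l ε_i z'_i‖. Then there exists a subset τ' ⊆ {1,…,l} with |τ'| ≥ l/(8w') such that for all scalars (t_i): ‖∑_{i∈τ'} t_i z'_i‖ ≥ (1/2)·max_{i∈τ'}|t_i|. -/

import Mathlib

/-!
Take norming functionals `fᵢ` (`‖fᵢ‖ = 1`, `fᵢ z'ᵢ = ‖z'ᵢ‖`) and the matrix `aᵢⱼ = |fᵢ z'ⱼ|`.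
Choosing `εⱼ` as the sign of `fᵢ z'ⱼ` shows that every row of `a` sums to at most `w'`.
A random set `S` containing each index independently with probability `p = 1/(4w')` has
`E ∑_{i ∈ S} (1 - 2 ∑_{j ∈ S, j ≠ i} aᵢⱼ) ≥ pl - 2p²lw' = l/(8w')`; discarding from a good `S`
the indices whose off-diagonal row sum inside `S` exceeds `1/2` leaves `τ'`, still of at least
that size. Testing `∑_{i ∈ τ'} tᵢ z'ᵢ` against `f_{i₀}` with `|t_{i₀}|` maximal then gives
`‖∑ tᵢ z'ᵢ‖ ≥ |t_{i₀}| - |t_{i₀}|/2`.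
-/

open Finset

section BernoulliWeight

variable {ι : Type*} [Fintype ι] [DecidableEq ι]

/-- The probability that a random subset, containing each element independently with
probability `p`, equals `S`. -/
def bernoulliWeight (p : ℝ) (S : Finset ι) : ℝ := p ^ #S * (1 - p) ^ #Sᶜ

lemma bernoulliWeight_nonneg {p : ℝ} (hp₀ : 0 ≤ p) (hp₁ : p ≤ 1) (S : Finset ι) :
    0 ≤ bernoulliWeight p S := by
  unfold bernoulliWeight
  have : 0 ≤ 1 - p := by linarith
  positivity

lemma sum_bernoulliWeight_superset (p : ℝ) (T : Finset ι) :
    ∑ S with T ⊆ S, bernoulliWeight p S = p ^ #T := by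
  have key := prod_add (fun _ => p) (fun k => if k ∉ T then 1 - p else 0) univ
  have lhs : ∏ k, (p + if k ∉ T then 1 - p else 0) = p ^ #T := by
    calc ∏ k, (p + if k ∉ T then 1 - p else 0) = ∏ k, if k ∈ T then p else 1 :=
          prod_congr rfl fun k _ => by split_ifs <;> ring
      _ = p ^ #T := by rw [prod_ite_mem, univ_inter, prod_const]
  have rhs (S : Finset ι) : (∏ k ∈ S, p) * ∏ k ∈ univ \ S, (if k ∉ T then 1 - p else 0) =
      if T ⊆ S then bernoulliWeight p S else 0 := by
    have : (∀ k ∈ Sᶜ, k ∉ T) ↔ T ⊆ S := by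
      simp only [mem_compl]
      exact ⟨fun h k hk => by_contra fun hkS => h k hkS hk, fun h k hkS hk => hkS (h hk)⟩
    simp only [prod_ite_zero, ← compl_eq_univ_sdiff, this, prod_const, bernoulliWeight]
    split_ifs <;> simp
  rw [lhs, powerset_univ] at key
  simp_rw [rhs, ← sum_filter] at key
  exact key.symm

lemma sum_bernoulliWeight (p : ℝ) : ∑ S, bernoulliWeight p (S : Finset ι) = 1 := by
  simpa using sum_bernoulliWeight_superset (ι := ι) p ∅

lemma sum_bernoulliWeight_mul_sum (p : ℝ) (g : ι → ℝ) :
    ∑ S, bernoulliWeight p S * ∑ i ∈ S, g i = p * ∑ i, g i := by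
  have h (S : Finset ι) : ∑ i ∈ S, g i = ∑ i, if {i} ⊆ S then g i else 0 := by
    simp
  simp_rw [h, mul_sum, mul_ite, mul_zero]
  rw [sum_comm]
  refine sum_congr rfl fun i _ => ?_
  rw [← sum_filter, ← sum_mul, sum_bernoulliWeight_superset]
  simp

lemma sum_bernoulliWeight_mul_sum_offDiag (p : ℝ) (h : ι → ι → ℝ) :
    ∑ S, bernoulliWeight p S * ∑ i ∈ S, ∑ j ∈ S.erase i, h i j =
      p ^ 2 * ∑ i, ∑ j ∈ univ.erase i, h i j := by
  have hS (S : Finset ι) : ∑ i ∈ S, ∑ j ∈ S.erase i, h i j =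
      ∑ i, ∑ j ∈ univ.erase i, if {i, j} ⊆ S then h i j else 0 := by
    rw [← sum_subset (subset_univ S) fun i _ hi =>
      sum_eq_zero fun j _ => by simp [insert_subset_iff, hi]]
    refine sum_congr rfl fun i hi => ?_
    rw [← sum_filter]
    congr 1
    ext j
    simp [insert_subset_iff, hi]
  simp_rw [hS, mul_sum, mul_ite, mul_zero]
  rw [sum_comm]
  refine sum_congr rfl fun i _ => ?_
  rw [sum_comm]
  refine sum_congr rfl fun j hj => ?_
  rw [← sum_filter, ← sum_mul, sum_bernoulliWeight_superset,
    card_pair (ne_of_mem_erase hj).symm]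
  simp

lemma exists_sum_bernoulliWeight_mul_le {p : ℝ} (hp₀ : 0 ≤ p) (hp₁ : p ≤ 1)
    (Φ : Finset ι → ℝ) : ∃ S, ∑ T, bernoulliWeight p T * Φ T ≤ Φ S := by
  obtain ⟨S, -, hS⟩ := exists_max_image univ Φ univ_nonempty
  refine ⟨S, ?_⟩
  calc ∑ T, bernoulliWeight p T * Φ T ≤ ∑ T, bernoulliWeight p T * Φ S :=
        sum_le_sum fun T _ => mul_le_mul_of_nonneg_left (hS T (mem_univ T))
          (bernoulliWeight_nonneg hp₀ hp₁ T)
    _ = Φ S := by rw [← sum_mul, sum_bernoulliWeight, one_mul]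

end BernoulliWeight

section OffDiagonalSelection

variable {ι : Type*} [Fintype ι] [DecidableEq ι] (a : ι → ι → ℝ)

lemma exists_subset_sum_one_sub_two_mul_offDiag_ge {p : ℝ} (hp₀ : 0 ≤ p) (hp₁ : p ≤ 1) :
    ∃ S : Finset ι, p * Fintype.card ι - 2 * p ^ 2 * ∑ i, ∑ j ∈ univ.erase i, a i j ≤
      ∑ i ∈ S, (1 - 2 * ∑ j ∈ S.erase i, a i j) := by
  obtain ⟨S, hS⟩ := exists_sum_bernoulliWeight_mul_le hp₀ hp₁
    fun S => ∑ i ∈ S, (1 - 2 * ∑ j ∈ S.erase i, a i j)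
  refine ⟨S, le_of_eq_of_le ?_ hS⟩
  simp_rw [sum_sub_distrib, ← mul_sum, mul_sub, sum_sub_distrib, mul_left_comm _ (2 : ℝ),
    ← mul_sum, sum_bernoulliWeight_mul_sum, sum_bernoulliWeight_mul_sum_offDiag]
  simp [mul_assoc]

lemma exists_large_subset_offDiag_sum_le_half (ha : ∀ i j, 0 ≤ a i j) {w : ℝ} (hw : 1 / 4 ≤ w)
    (hrow : ∀ i, ∑ j ∈ univ.erase i, a i j ≤ w) :
    ∃ τ : Finset ι, Fintype.card ι / (8 * w) ≤ #τ ∧ ∀ i ∈ τ, ∑ j ∈ τ.erase i, a i j ≤ 1 / 2 := by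
  have hw₀ : 0 < w := by linarith
  obtain ⟨S, hS⟩ := exists_subset_sum_one_sub_two_mul_offDiag_ge a (p := 1 / (4 * w))
    (by positivity) (by rw [div_le_one (by positivity)]; linarith)
  set r : ι → ℝ := fun i => ∑ j ∈ S.erase i, a i j
  refine ⟨S.filter fun i => r i ≤ 1 / 2, ?_, fun i hi => ?_⟩
  · have hA : ∑ i, ∑ j ∈ univ.erase i, a i j ≤ Fintype.card ι * w := by
      simpa using sum_le_sum fun i (_ : i ∈ univ) => hrow i
    calc (Fintype.card ι : ℝ) / (8 * w)
        = 1 / (4 * w) * Fintype.card ι - 2 * (1 / (4 * w)) ^ 2 * (Fintype.card ι * w) := by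
          field_simp; ring
      _ ≤ 1 / (4 * w) * Fintype.card ι -
            2 * (1 / (4 * w)) ^ 2 * ∑ i, ∑ j ∈ univ.erase i, a i j := by
          gcongr
      _ ≤ ∑ i ∈ S, (1 - 2 * r i) := hS
      _ ≤ ∑ i ∈ S, if r i ≤ 1 / 2 then 1 else 0 := sum_le_sum fun i _ => by
          have : 0 ≤ r i := sum_nonneg fun j _ => ha i j
          split_ifs <;> linarith
      _ = #(S.filter fun i => r i ≤ 1 / 2) := by rw [sum_boole]
  · obtain ⟨-, hri⟩ := mem_filter.mp hi
    exact (sum_le_sum_of_subset_of_nonneg (erase_subset_erase i (filter_subset _ S))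
      fun j _ _ => ha i j).trans hri

end OffDiagonalSelection

section LowerEllInfinity

variable {ι V : Type*} [NormedAddCommGroup V] [NormedSpace ℝ V]

lemma exists_signs_sum_abs_le [Fintype ι] (f : StrongDual ℝ V) (z : ι → V) :
    ∃ ε : ι → Bool, ∑ j, |f (z j)| ≤ ‖f‖ * ‖∑ j, (if ε j then (1 : ℝ) else -1) • z j‖ := by
  refine ⟨fun j => decide (0 ≤ f (z j)), ?_⟩
  have hsum : ∑ j, |f (z j)| = f (∑ j, (if decide (0 ≤ f (z j)) then (1 : ℝ) else -1) • z j) := by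
    simp only [map_sum, map_smul, smul_eq_mul, decide_eq_true_eq]
    refine sum_congr rfl fun j _ => ?_
    split_ifs with hj
    · rw [abs_of_nonneg hj, one_mul]
    · rw [abs_of_neg (not_le.mp hj), neg_one_mul]
  rw [hsum]
  exact (le_abs_self _).trans (f.le_opNorm _)

lemma mul_iSup_abs_le_norm_sum_smul [DecidableEq ι] (f : ι → StrongDual ℝ V) (z : ι → V)
    (τ : Finset ι) {δ : ℝ} (hδ : δ ≤ 1) (hf : ∀ i, ‖f i‖ ≤ 1) (hfz : ∀ i, 1 ≤ f i (z i))
    (hoff : ∀ i ∈ τ, ∑ j ∈ τ.erase i, |f i (z j)| ≤ δ) (t : ι → ℝ) :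
    (1 - δ) * ⨆ i ∈ τ, |t i| ≤ ‖∑ i ∈ τ, t i • z i‖ := by
  rcases τ.eq_empty_or_nonempty with rfl | hτ
  · simp
  obtain ⟨i₀, hi₀, hmax⟩ := exists_max_image τ (fun i => |t i|) hτ
  have hsup : ⨆ i ∈ τ, |t i| ≤ |t i₀| :=
    Real.iSup_le (fun i => Real.iSup_le (hmax i) (abs_nonneg _)) (abs_nonneg _)
  set rest := ∑ j ∈ τ.erase i₀, t j * f i₀ (z j)
  have hsplit : f i₀ (∑ i ∈ τ, t i • z i) = t i₀ * f i₀ (z i₀) + rest := by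
    simp only [map_sum, map_smul, smul_eq_mul, rest]
    exact (add_sum_erase τ _ hi₀).symm
  have hrest : |rest| ≤ |t i₀| * δ :=
    calc |rest| ≤ ∑ j ∈ τ.erase i₀, |t j| * |f i₀ (z j)| := by
          simpa only [abs_mul] using abs_sum_le_sum_abs (fun j => t j * f i₀ (z j)) (τ.erase i₀)
      _ ≤ ∑ j ∈ τ.erase i₀, |t i₀| * |f i₀ (z j)| := sum_le_sum fun j hj =>
          mul_le_mul_of_nonneg_right (hmax j (mem_of_mem_erase hj)) (abs_nonneg _)
      _ ≤ |t i₀| * δ := by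
          rw [← mul_sum]
          exact mul_le_mul_of_nonneg_left (hoff i₀ hi₀) (abs_nonneg _)
  calc (1 - δ) * ⨆ i ∈ τ, |t i| ≤ (1 - δ) * |t i₀| := mul_le_mul_of_nonneg_left hsup (by linarith)
    _ ≤ |t i₀| * f i₀ (z i₀) - |rest| := by nlinarith [abs_nonneg (t i₀), hfz i₀]
    _ = |t i₀ * f i₀ (z i₀)| - |rest| := by
        rw [abs_mul, abs_of_nonneg (zero_le_one.trans (hfz i₀))]
    _ ≤ |t i₀ * f i₀ (z i₀) + rest| := by
        simpa only [abs_neg, sub_neg_eq_add] using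
          abs_sub_abs_le_abs_sub (t i₀ * f i₀ (z i₀)) (-rest)
    _ = |f i₀ (∑ i ∈ τ, t i • z i)| := by rw [hsplit]
    _ ≤ ‖∑ i ∈ τ, t i • z i‖ := by
        simpa using (f i₀).le_of_opNorm_le (hf i₀) (∑ i ∈ τ, t i • z i)

end LowerEllInfinity

/-- Talagrand's lower `ℓ∞` extraction: if `‖z'ᵢ‖ ≥ 1` for all `i` and `w'` is the maximum of
`‖∑ εᵢ z'ᵢ‖` over signs, there is a subset `τ'` of cardinality at least `l/(8w')` on which
`‖∑_{i∈τ'} tᵢ z'ᵢ‖ ≥ (1/2) max_{i∈τ'}|tᵢ|`. -/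
theorem stmt_6 {V : Type*} [NormedAddCommGroup V] [NormedSpace ℝ V]
    (l : ℕ) (z' : Fin l → V) (hz' : ∀ i, 1 ≤ ‖z' i‖) (w' : ℝ)
    (hw' : w' = ⨆ ε : Fin l → Bool, ‖∑ i, (if ε i then (1 : ℝ) else -1) • z' i‖) :
    ∃ τ' : Finset (Fin l),
      (l : ℝ) / (8 * w') ≤ (τ'.card : ℝ) ∧
      ∀ t : Fin l → ℝ, (1 / 2 : ℝ) * ⨆ i ∈ τ', |t i| ≤ ‖∑ i ∈ τ', t i • z' i‖ := by
  rcases Nat.eq_zero_or_pos l with rfl | hl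
  · exact ⟨∅, by simp, fun t => by simp⟩
  choose f hf hfz using fun i => exists_dual_vector ℝ (z' i) (by linarith [hz' i])
  have hfz' (i : Fin l) : f i (z' i) = ‖z' i‖ := by simpa using hfz i
  have hrow (i : Fin l) : ∑ j, |f i (z' j)| ≤ w' := by
    obtain ⟨ε, hε⟩ := exists_signs_sum_abs_le (f i) z'
    rw [hf, one_mul] at hε
    rw [hw']
    exact hε.trans (le_ciSup (f := fun ε : Fin l → Bool =>
      ‖∑ j, (if ε j then (1 : ℝ) else -1) • z' j‖) (Set.finite_range _).bddAbove ε)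
  have hw : 1 ≤ w' := by
    have i : Fin l := ⟨0, hl⟩
    calc 1 ≤ |f i (z' i)| := by rw [hfz', abs_norm]; exact hz' i
      _ ≤ ∑ j, |f i (z' j)| :=
          single_le_sum (f := fun j => |f i (z' j)|) (fun j _ => abs_nonneg _) (mem_univ i)
      _ ≤ w' := hrow i
  obtain ⟨τ, hcard, hτ⟩ := exists_large_subset_offDiag_sum_le_half (fun i j => |f i (z' j)|)
    (fun _ _ => abs_nonneg _) (by linarith) fun i =>
      (sum_le_sum_of_subset_of_nonneg (erase_subset i univ) fun _ _ _ => abs_nonneg _).trans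
        (hrow i)
  refine ⟨τ, by simpa using hcard, fun t => ?_⟩
  convert mul_iSup_abs_le_norm_sum_smul f z' τ (by norm_num) (fun i => (hf i).le)
    (fun i => (hfz' i).symm ▸ hz' i) hτ t using 2
  norm_num
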